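/- arXiv:1707.07893 — 2 statements merged into one kernel-verified Lean document; each statement's English description precedes it below -/
import Mathlib

section
/- Let a : ℝ → M_n(ℂ) be continuous with a(t) Hermitian positive semidefinite for all t, let G solve G(0) = Id, G'(t) = -a(t)G(t), and set Γ(t) = G(t)·G(t)*. Then Γ solves Γ(0) = Id, Γ'(t) = -a(t)Γ(t) - Γ(t)a(t), each Γ(t) is Hermitian positive definite, and the function t ↦ ‖Γ(t)‖₂ is non-increasing on [0,∞). -/
open Matrix
open scoped Matrix.Norms.L2Operator ComplexOrder InnerProductSpace

/-!
`Γ = G Gᴴ` is invertible because `G t` is: if `G t * B = 0`, then `s ↦ G s * B` solves the linear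
equation `X' = -a X` and vanishes at `t`, so by uniqueness of solutions it vanishes at `0`, where it
equals `B`. For the norm, `‖Γ t‖ = ‖G t‖²`, and for every vector `v` the derivative of `‖G s v‖²` is
`-2 Re ⟪G s v, a s (G s v)⟫ ≤ 0`, so `‖G t v‖ ≤ ‖G s v‖ ≤ ‖G s‖ ‖v‖` for `s ≤ t`.
-/

section LinearODE

variable {R : Type*} [NormedRing R] [NormedAlgebra ℝ R]

theorem eq_zero_of_hasDerivAt_mul_left {a u : ℝ → R} (ha : Continuous a)
    (hu : ∀ t, HasDerivAt u (a t * u t) t) {t₀ : ℝ} (hu₀ : u t₀ = 0) : u = 0 := by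
  ext t
  obtain ⟨A, B, ht, ht₀⟩ : ∃ A B, t ∈ Set.Ioo A B ∧ t₀ ∈ Set.Ioo A B :=
    ⟨min t t₀ - 1, max t t₀ + 1, by grind⟩
  obtain ⟨C, hC⟩ := isCompact_Icc.exists_bound_of_continuousOn (ha.continuousOn (s := Set.Icc A B))
  have hlip : ∀ s ∈ Set.Ioo A B, LipschitzOnWith C.toNNReal (a s * ·) Set.univ := by
    refine fun s hs => (LipschitzWith.of_dist_le_mul fun x y => ?_).lipschitzOnWith
    rw [dist_eq_norm, dist_eq_norm, ← mul_sub]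
    calc ‖a s * (x - y)‖ ≤ ‖a s‖ * ‖x - y‖ := norm_mul_le _ _
      _ ≤ C.toNNReal * ‖x - y‖ := by
        gcongr
        exact (hC s (Set.Ioo_subset_Icc_self hs)).trans (Real.le_coe_toNNReal C)
  exact ODE_solution_unique_of_mem_Ioo hlip ht₀ (fun s _ => ⟨hu s, trivial⟩)
    (fun s _ => ⟨by simp, trivial⟩) hu₀ ht

theorem isLeftRegular_of_hasDerivAt_mul_left {a G : ℝ → R} (ha : Continuous a)
    (hG : ∀ t, HasDerivAt G (a t * G t) t) {t₀ : ℝ} (hG₀ : G t₀ = 1) (t : ℝ) :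
    IsLeftRegular (G t) := by
  intro B C hBC
  have hsol : ∀ s, HasDerivAt (fun s => G s * (B - C)) (a s * (G s * (B - C))) s := fun s => by
    simpa only [mul_assoc] using (hG s).mul_const (B - C)
  have hzero := eq_zero_of_hasDerivAt_mul_left ha hsol (t₀ := t)
    (by rw [mul_sub, sub_eq_zero]; exact hBC)
  simpa [hG₀, sub_eq_zero] using congrFun hzero t₀

end LinearODE

theorem antitone_norm_of_re_inner_deriv_nonpos {𝕜 E : Type*} [RCLike 𝕜] [NormedAddCommGroup E]
    [InnerProductSpace 𝕜 E] [NormedSpace ℝ E] {u u' : ℝ → E}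
    (hu : ∀ t, HasDerivAt u (u' t) t) (h : ∀ t, RCLike.re ⟪u t, u' t⟫_𝕜 ≤ 0) :
    Antitone fun t => ‖u t‖ := by
  have hsq : ∀ t, HasDerivAt (fun s => ‖u s‖ ^ 2) (2 * RCLike.re ⟪u t, u' t⟫_𝕜) t := by
    intro t
    have hre : HasDerivAt (fun s => RCLike.re ⟪u s, u s⟫_𝕜)
        (RCLike.re (⟪u t, u' t⟫_𝕜 + ⟪u' t, u t⟫_𝕜)) t :=
      (RCLike.reCLM (K := 𝕜)).hasFDerivAt.comp_hasDerivAt t ((hu t).inner 𝕜 (hu t))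
    simp only [← norm_sq_eq_re_inner] at hre
    rwa [map_add, ← inner_conj_symm (u' t), RCLike.conj_re, ← two_mul] at hre
  have hsq_anti := antitone_of_hasDerivAt_nonpos hsq fun t => by
    simpa using mul_nonpos_of_nonneg_of_nonpos zero_le_two (h t)
  exact fun s t hst =>
    (pow_le_pow_iff_left₀ (norm_nonneg _) (norm_nonneg _) two_ne_zero).1 (hsq_anti hst)

namespace Matrix

variable {ι : Type*} [Fintype ι] [DecidableEq ι]

theorem hasDerivAt_toEuclideanCLM_apply {G : ℝ → Matrix ι ι ℂ} {G' : Matrix ι ι ℂ} {t : ℝ}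
    (hG : HasDerivAt G G' t) (v : EuclideanSpace ℂ ι) :
    HasDerivAt (fun s => toEuclideanCLM (𝕜 := ℂ) (G s) v) (toEuclideanCLM (𝕜 := ℂ) G' v) t := by
  let L : Matrix ι ι ℂ →L[ℂ] EuclideanSpace ℂ ι := (ContinuousLinearMap.apply ℂ _ v).comp
    (LinearMap.toContinuousLinearMap (toEuclideanCLM (𝕜 := ℂ) (n := ι)).toAlgEquiv.toLinearMap)
  exact (L.restrictScalars ℝ).hasFDerivAt.comp_hasDerivAt t hG

theorem PosSemidef.re_inner_toEuclideanCLM_nonneg {A : Matrix ι ι ℂ} (hA : A.PosSemidef)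
    (x : EuclideanSpace ℂ ι) : 0 ≤ RCLike.re ⟪x, toEuclideanCLM (𝕜 := ℂ) A x⟫_ℂ :=
  (isPositive_toEuclideanLin_iff.2 hA).re_inner_nonneg_right x

theorem antitone_l2_opNorm_of_hasDerivAt_neg_mul {a G : ℝ → Matrix ι ι ℂ}
    (ha : ∀ t, (a t).PosSemidef) (hG : ∀ t, HasDerivAt G (-(a t) * G t) t) :
    Antitone fun t => ‖G t‖ := by
  intro s t hst
  simp only [cstar_norm_def]
  refine ContinuousLinearMap.opNorm_le_bound _ (norm_nonneg _) fun v => ?_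
  have hu := fun t => hasDerivAt_toEuclideanCLM_apply (hG t) v
  refine (antitone_norm_of_re_inner_deriv_nonpos (𝕜 := ℂ) hu (fun t => ?_) hst).trans
    ((toEuclideanCLM (𝕜 := ℂ) (G s)).le_opNorm v)
  simpa [inner_neg_right] using
    (ha t).re_inner_toEuclideanCLM_nonneg (toEuclideanCLM (𝕜 := ℂ) (G t) v)

end Matrix

/-- With `G' = -aG`, `G 0 = 1`, `a` continuous Hermitian positive semidefinite, the matrix
`Γ t = G t * (G t)*` satisfies `Γ 0 = 1`, `Γ' = -aΓ - Γa`, each `Γ t` is Hermitian positive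
definite, and `t ↦ ‖Γ t‖₂` is non-increasing on `[0,∞)`. -/
theorem stmt_5 {n : ℕ} (a G : ℝ → Matrix (Fin n) (Fin n) ℂ)
    (ha_cont : Continuous a) (ha_psd : ∀ t, (a t).PosSemidef)
    (hG0 : G 0 = 1) (hG : ∀ t, HasDerivAt G (-(a t) * G t) t) :
    (fun t => G t * (G t)ᴴ) 0 = 1 ∧
    (∀ t, HasDerivAt (fun t => G t * (G t)ᴴ)
      (-(a t) * (G t * (G t)ᴴ) - (G t * (G t)ᴴ) * a t) t) ∧
    (∀ t, (G t * (G t)ᴴ).PosDef) ∧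
    AntitoneOn (fun t => ‖G t * (G t)ᴴ‖) (Set.Ici 0) := by
  have hunit : ∀ t, IsUnit (G t) := fun t => IsArtinianRing.isUnit_iff_isLeftRegular.2
    (isLeftRegular_of_hasDerivAt_mul_left (a := -a) ha_cont.neg hG hG0 t)
  refine ⟨by simp [hG0], fun t => ?_, fun t => ?_, fun s _ t _ hst => ?_⟩
  · refine ((hG t).mul (hG t).star).congr_deriv ?_
    rw [star_mul, star_eq_conjTranspose, star_eq_conjTranspose, conjTranspose_neg,
      (ha_psd t).isHermitian.eq]
    noncomm_ring
  · exact (posSemidef_self_mul_conjTranspose (G t)).posDef_iff_isUnit.2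
      ((hunit t).mul ((isUnit_conjTranspose _).2 (hunit t)))
  · simp only [← star_eq_conjTranspose, CStarRing.norm_self_mul_star]
    exact mul_self_le_mul_self (norm_nonneg _)
      (antitone_l2_opNorm_of_hasDerivAt_neg_mul ha_psd hG hst)
end

section
/- Let A ∈ M_n(ℂ) be Hermitian positive semidefinite with ‖A‖₂ ≤ 1, and let y ∈ ℂⁿ be a unit vector with A y = y. Let a : ℝ → M_n(ℂ) be continuous Hermitian positive semidefinite and G solve G(0)=Id, G'(t) = -a(t)G(t). If a(t)y = 0 for all t ∈ ℝ, then ‖G(t)‖₂ = 1 for all t ≥ 0. -/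
open Matrix
open scoped Matrix.Norms.L2Operator ComplexOrder
open RCLike

/-!
Along the flow `G' = -a G` with `a ≥ 0`, every trajectory `G t x` has nonincreasing norm, since
`d/dt ‖G t x‖² = -2 re ⟪a t (G t x), G t x⟫ ≤ 0`; hence `‖G t‖ ≤ ‖G 0‖ = 1` for `t ≥ 0`.
Conversely, as `a t` is symmetric and kills `y`, `d/dt ⟪y, G t x⟫ = -⟪a t y, G t x⟫ = 0`, so
`⟪y, G t y⟫ = ‖y‖²` for all `t`, which forces `‖G t‖ ≥ 1`.
-/

theorem HasDerivAt.clm_apply_const {𝕜 E F : Type*} [NontriviallyNormedField 𝕜]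
    [NormedAlgebra ℝ 𝕜] [NormedAddCommGroup E] [NormedSpace 𝕜 E] [NormedAddCommGroup F]
    [NormedSpace 𝕜 F] [NormedSpace ℝ F] [IsScalarTower ℝ 𝕜 F] {G : ℝ → E →L[𝕜] F}
    {G' : E →L[𝕜] F} {t : ℝ} (hG : HasDerivAt G G' t) (x : E) :
    HasDerivAt (fun s ↦ G s x) (G' x) t :=
  ((ContinuousLinearMap.apply 𝕜 F x).restrictScalars ℝ).hasFDerivAt.comp_hasDerivAt t hG

section Trajectory

variable {𝕜 E : Type*} [RCLike 𝕜] [NormedAddCommGroup E] [InnerProductSpace 𝕜 E]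
  [NormedSpace ℝ E]

theorem antitone_norm_of_re_inner_deriv_nonpos_s10 {u v : ℝ → E}
    (hu : ∀ s, HasDerivAt u (v s) s) (hv : ∀ s, re (inner 𝕜 (v s) (u s)) ≤ 0) :
    Antitone fun s ↦ ‖u s‖ := by
  have hsq : ∀ s, HasDerivAt (fun s ↦ re (inner 𝕜 (u s) (u s)))
      (re (inner 𝕜 (u s) (v s) + inner 𝕜 (v s) (u s))) s := fun s ↦
    (reCLM (K := 𝕜)).hasFDerivAt.comp_hasDerivAt s ((hu s).inner 𝕜 (hu s))
  have hanti : Antitone fun s ↦ re (inner 𝕜 (u s) (u s)) := by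
    refine antitone_of_deriv_nonpos (fun s ↦ (hsq s).differentiableAt) fun s ↦ ?_
    rw [(hsq s).deriv, map_add, inner_re_symm (u s)]
    linarith [hv s]
  intro s t hst
  have := hanti hst
  simp only [inner_self_eq_norm_sq] at this
  exact (pow_le_pow_iff_left₀ (norm_nonneg _) (norm_nonneg _) two_ne_zero).1 this

theorem inner_eq_of_hasDerivAt_neg_apply {a : ℝ → E →L[𝕜] E} {u : ℝ → E} {y : E}
    (ha : ∀ s, (a s : E →ₗ[𝕜] E).IsSymmetric) (hay : ∀ s, a s y = 0)
    (hu : ∀ s, HasDerivAt u (-(a s (u s))) s) (t : ℝ) :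
    inner 𝕜 y (u t) = inner 𝕜 y (u 0) := by
  have hderiv : ∀ s, HasDerivAt (fun s ↦ inner 𝕜 y (u s)) 0 s := by
    intro s
    have := (hasDerivAt_const s y).inner 𝕜 (hu s)
    rwa [inner_neg_right, ← ContinuousLinearMap.coe_coe, ← ha s, ContinuousLinearMap.coe_coe,
      hay s, inner_zero_left, neg_zero, add_zero] at this
  exact is_const_of_deriv_eq_zero (fun s ↦ (hderiv s).differentiableAt)
    (fun s ↦ (hderiv s).deriv) t 0

end Trajectory

section Propagator

variable {𝕜 E : Type*} [RCLike 𝕜] [NormedAddCommGroup E] [InnerProductSpace 𝕜 E]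
  [NormedSpace ℝ E] [IsScalarTower ℝ 𝕜 E] {a G : ℝ → E →L[𝕜] E}

theorem norm_le_of_hasDerivAt_neg_mul (ha : ∀ s x, 0 ≤ re (inner 𝕜 (a s x) x))
    (hG : ∀ s, HasDerivAt G (-(a s) * G s) s) {t : ℝ} (ht : 0 ≤ t) : ‖G t‖ ≤ ‖G 0‖ := by
  refine (G t).opNorm_le_bound (norm_nonneg _) fun x ↦ ?_
  have hdecay : ∀ s, re (inner 𝕜 (-(a s (G s x))) (G s x)) ≤ 0 := fun s ↦ by
    rw [inner_neg_left, map_neg, neg_nonpos]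
    exact ha s _
  calc ‖G t x‖ ≤ ‖G 0 x‖ :=
        antitone_norm_of_re_inner_deriv_nonpos_s10 (fun s ↦ (hG s).clm_apply_const x) hdecay ht
    _ ≤ ‖G 0‖ * ‖x‖ := (G 0).le_opNorm x

theorem one_le_norm_of_hasDerivAt_neg_mul {y : E} (hy : y ≠ 0)
    (ha : ∀ s, (a s : E →ₗ[𝕜] E).IsSymmetric) (hay : ∀ s, a s y = 0)
    (hG0 : G 0 = 1) (hG : ∀ s, HasDerivAt G (-(a s) * G s) s) (t : ℝ) : 1 ≤ ‖G t‖ := by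
  have hinner : inner 𝕜 y (G t y) = inner 𝕜 y y := by
    simpa [hG0] using inner_eq_of_hasDerivAt_neg_apply ha hay (fun s ↦ (hG s).clm_apply_const y) t
  refine le_of_mul_le_mul_right ?_ (by positivity : 0 < ‖y‖ ^ 2)
  calc 1 * ‖y‖ ^ 2 = ‖inner 𝕜 y (G t y)‖ := by
        rw [hinner, inner_self_eq_norm_sq_to_K, norm_pow, norm_ofReal, abs_norm, one_mul]
    _ ≤ ‖y‖ * ‖G t y‖ := norm_inner_le_norm _ _
    _ ≤ ‖y‖ * (‖G t‖ * ‖y‖) := by gcongr; exact (G t).le_opNorm y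
    _ = ‖G t‖ * ‖y‖ ^ 2 := by ring

end Propagator

theorem HasDerivAt.toEuclideanCLM {m : Type*} [Fintype m] [DecidableEq m]
    {G : ℝ → Matrix m m ℂ} {G' : Matrix m m ℂ} {t : ℝ} (hG : HasDerivAt G G' t) :
    HasDerivAt (fun s ↦ Matrix.toEuclideanCLM (𝕜 := ℂ) (G s))
      (Matrix.toEuclideanCLM (𝕜 := ℂ) G') t :=
  (((Matrix.toEuclideanCLM (𝕜 := ℂ) (n := m)).toAlgEquiv.toLinearEquiv.toLinearMap.restrictScalars
    ℝ).toContinuousLinearMap.hasFDerivAt).comp_hasDerivAt t hG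

theorem stmt_10_general {n : ℕ}
    (y : Fin n → ℂ) (hy : star y ⬝ᵥ y = 1)
    (a G : ℝ → Matrix (Fin n) (Fin n) ℂ)
    (ha_psd : ∀ t, (a t).PosSemidef)
    (hG0 : G 0 = 1) (hG : ∀ t, HasDerivAt G (-(a t) * G t) t)
    (hay : ∀ t : ℝ, a t *ᵥ y = 0) :
    ∀ t, 0 ≤ t → ‖G t‖ = 1 := by
  intro t ht
  set T := toEuclideanCLM (𝕜 := ℂ) (n := Fin n)
  have hpos : ∀ s, (T (a s)).IsPositive := fun s ↦
    (ContinuousLinearMap.isPositive_toLinearMap_iff _).1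
      (isPositive_toEuclideanLin_iff.2 (ha_psd s))
  have hTG : ∀ s, HasDerivAt (fun s ↦ T (G s)) (-(T (a s)) * T (G s)) s := fun s ↦ by
    simpa only [map_mul, map_neg] using (hG s).toEuclideanCLM
  have hTy : ∀ s, T (a s) (WithLp.toLp 2 y) = 0 := fun s ↦ by
    rw [toEuclideanCLM_toLp, hay, WithLp.toLp_zero]
  have hy0 : WithLp.toLp 2 y ≠ 0 := by
    rintro h
    rw [WithLp.toLp_eq_zero] at h
    simp [h] at hy
  have hTG0 : T (G 0) = 1 := by rw [hG0, map_one]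
  refine le_antisymm ?_ ?_
  · calc ‖G t‖ = ‖T (G t)‖ := rfl
      _ ≤ ‖T (G 0)‖ :=
        norm_le_of_hasDerivAt_neg_mul (fun s ↦ (hpos s).re_inner_nonneg_left) hTG ht
      _ ≤ 1 := hTG0 ▸ ContinuousLinearMap.norm_id_le
  · exact one_le_norm_of_hasDerivAt_neg_mul hy0 (fun s ↦ (hpos s).isSymmetric) hTy hTG0 hTG t

/-- If `A` is Hermitian positive semidefinite with `‖A‖₂ ≤ 1` and `A y = y` for a unit vector
`y`, and the damping `a` (continuous, Hermitian positive semidefinite) kills `y` along the whole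
trajectory (`a t y = 0` for all `t`), then the solution of `G 0 = 1`, `G' = -aG` satisfies
`‖G t‖₂ = 1` for all `t ≥ 0`. -/
theorem stmt_10 {n : ℕ} (A : Matrix (Fin n) (Fin n) ℂ)
    (hA : A.PosSemidef) (hA1 : ‖A‖ ≤ 1)
    (y : Fin n → ℂ) (hy : star y ⬝ᵥ y = 1) (hAy : A *ᵥ y = y)
    (a G : ℝ → Matrix (Fin n) (Fin n) ℂ)
    (ha_cont : Continuous a) (ha_psd : ∀ t, (a t).PosSemidef)
    (hG0 : G 0 = 1) (hG : ∀ t, HasDerivAt G (-(a t) * G t) t)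
    (hay : ∀ t : ℝ, a t *ᵥ y = 0) :
    ∀ t, 0 ≤ t → ‖G t‖ = 1 :=
  stmt_10_general y hy a G ha_psd hG0 hG hay
end
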